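/- Suppose (X, τ) is a Choquet topological space, B ⊆ 𝒫(X) is a base for τ which is closed under finite intersections, and B₀ ⊆ B. Then there exists B₁ with B₀ ⊆ B₁ ⊆ B such that the cardinality of B₁ is at most (cardinality of B₀) + ℵ₀ and the space (X, τ_{B₁}) is Choquet, where τ_{B₁} is the topology on X generated by B₁. -/

import Mathlib

/-- The history (most recent move first) of player A's first `n` moves in the
Choquet game, a move being an open set. -/
def chHist {X : Type*} (f : ℕ → Set X) : ℕ → List (Set X)
  | 0 => []
  | n + 1 => f n :: chHist f n

/-- Legality of a history of moves of player A (most recent first) in the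
Choquet game on `X` with topology `t`, when player B plays according to the
strategy `σ`: each move must be a nonempty `t`-open set contained in B's
previous move (`σ` applied to the previous history). -/
def ChLegal {X : Type*} (t : TopologicalSpace X)
    (σ : List (Set X) → Set X) : List (Set X) → Prop
  | [] => True
  | U :: rest =>
      ChLegal t σ rest ∧ t.IsOpen U ∧ U.Nonempty ∧ (rest ≠ [] → U ⊆ σ rest)

/-- `(X, t)` is a Choquet space: player B has a winning strategy in the
Choquet game.  A strategy assigns to each history of A's moves a set for B; it
is winning if B's moves are always legal (nonempty open `Vₙ ⊆ Uₙ`) and every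
infinite legal play has nonempty intersection `⋂ₙ Vₙ`. -/
def IsChoquet {X : Type*} (t : TopologicalSpace X) : Prop :=
  ∃ σ : List (Set X) → Set X,
    (∀ (U : Set X) (rest : List (Set X)),
        ChLegal t σ (U :: rest) →
          t.IsOpen (σ (U :: rest)) ∧ (σ (U :: rest)).Nonempty ∧
            σ (U :: rest) ⊆ U) ∧
    (∀ f : ℕ → Set X, (∀ n : ℕ, ChLegal t σ (chHist f n)) →
        (⋂ n : ℕ, σ (chHist f (n + 1))).Nonempty)

/-!
Pick a winning strategy for B in `(X, τ)` whose moves lie in `B`. Close `B₀ ∪ {univ}` under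
binary intersections and under B's replies to finite histories of sets already obtained; as
in the Löwenheim–Skolem argument the closure `S` has at most `|B₀| + ℵ₀` members. In the
topology generated by `S`, player B first shrinks each move of A to a nonempty member of `S`
inside it and then replies as in `τ`: the replies lie in `S`, so they are legal, and each play
becomes a `τ`-play with the same moves of B, whose intersection is therefore nonempty.
-/

open Cardinal hiding univ
open Set Filter TopologicalSpace

theorem exists_superset_closed_card_le {α : Type*} (S₀ : Set α) (op : List α → Set α)
    (hop : ∀ l, (op l).Countable) :
    ∃ S, S₀ ⊆ S ∧ S ⊆ S₀ ∪ ⋃ l, op l ∧ #S ≤ #S₀ + ℵ₀ ∧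
      ∀ l : List α, (∀ x ∈ l, x ∈ S) → op l ⊆ S := by
  classical
  have hκ : ℵ₀ ≤ #S₀ + ℵ₀ := le_add_self
  let step : Set α → Set α := fun S => S ∪ ⋃ l : List S, op (l.map (↑))
  let T : ℕ → Set α := fun n => step^[n] S₀
  have hT_succ (n : ℕ) : T (n + 1) = step (T n) := Function.iterate_succ_apply' _ _ _
  have hT_mono : Monotone T :=
    monotone_nat_of_le_succ fun n => (hT_succ n).symm ▸ subset_union_left
  have hT_sub (n : ℕ) : T n ⊆ S₀ ∪ ⋃ l, op l := by
    induction n with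
    | zero => exact subset_union_left
    | succ n ih =>
      rw [hT_succ]
      exact union_subset ih (iUnion_subset fun l => subset_union_of_subset_right
        (subset_iUnion op _) _)
  have hT_card (n : ℕ) : #(T n) ≤ #S₀ + ℵ₀ := by
    induction n with
    | zero => exact le_self_add
    | succ n ih =>
      rw [hT_succ]
      calc #(step (T n)) ≤ #(T n) + #(List (T n)) * ⨆ l : List (T n), #(op (l.map (↑))) :=
            (mk_union_le _ _).trans (add_le_add_right (mk_iUnion_le _) _)
        _ ≤ (#S₀ + ℵ₀) + (#S₀ + ℵ₀) * ℵ₀ := by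
          gcongr
          · exact (mk_list_le_max _).trans (max_le hκ ih)
          · exact ciSup_le' fun l => (hop _).le_aleph0
        _ = #S₀ + ℵ₀ := by rw [mul_aleph0_eq hκ, add_eq_self hκ]
  refine ⟨⋃ n, T n, subset_iUnion T 0, iUnion_subset hT_sub, ?_, fun l hl => ?_⟩
  · refine mk_subtype_le_of_countable_eventually_mem (l := atTop) (fun x hx => ?_) hT_card
    obtain ⟨n, hn⟩ := mem_iUnion.1 hx
    exact eventually_atTop.2 ⟨n, fun m hm => hT_mono hm hn⟩
  · obtain ⟨n, hn⟩ := hT_mono.directed_le.exists_mem_subset_of_finset_subset_biUnion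
      (s := l.toFinset) (by simpa [subset_def] using hl)
    lift l to List (T n) using by simpa [subset_def] using hn
    exact (subset_iUnion (fun l : List (T n) => op (l.map (↑))) l).trans
      ((hT_succ n).symm ▸ subset_union_right) |>.trans (subset_iUnion T (n + 1))

theorem exists_finiteInter_superset_closed {X : Type*} {B B₀ : Set (Set X)}
    (hinter : ∀ s ∈ B, ∀ t ∈ B, s ∩ t ∈ B) (hB₀ : B₀ ⊆ B) (σ : List (Set X) → Set X) :
    ∃ S, FiniteInter S ∧ B₀ ⊆ S ∧ S ⊆ insert univ B ∧ #S ≤ #B₀ + ℵ₀ ∧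
      ∀ L : List (Set X), (∀ V ∈ L, V ∈ S) → σ L ∈ B → σ L ∈ S := by
  obtain ⟨S, hB₀S, hSsub, hScard, hSclosed⟩ := exists_superset_closed_card_le (insert univ B₀)
    (fun L => insert (σ L) (image2 (· ∩ ·) {V | V ∈ L} {V | V ∈ L}) ∩ B) fun L =>
      ((L.finite_toSet.image2 _ L.finite_toSet).insert _).countable.mono inter_subset_left
  have hSB : S ⊆ insert univ B := hSsub.trans <| union_subset (insert_subset_insert hB₀)
    (iUnion_subset fun _ => inter_subset_right.trans (subset_insert _ _))
  have hS : FiniteInter S := by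
    refine ⟨hB₀S (mem_insert _ _), fun a ha b hb => ?_⟩
    rcases hSB ha with rfl | haB
    · rwa [univ_inter]
    rcases hSB hb with rfl | hbB
    · rwa [inter_univ]
    refine hSclosed [a, b] (by simp [ha, hb]) ⟨?_, hinter a haB b hbB⟩
    exact mem_insert_of_mem _ (mem_image2_of_mem (by simp) (by simp))
  refine ⟨S, hS, (subset_insert _ _).trans hB₀S, hSB, ?_,
    fun L hL hσL => hSclosed L hL ⟨mem_insert _ _, hσL⟩⟩
  calc #S ≤ #B₀ + 1 + ℵ₀ := hScard.trans (add_le_add_left mk_insert_le _)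
    _ = #B₀ + ℵ₀ := by rw [add_assoc, ← Nat.cast_one, nat_add_aleph0]

section Game

variable {X : Type*}

/-- `IsChoquet t` unfolds to `∃ σ, ChWinning t σ`. -/
def ChWinning (t : TopologicalSpace X) (σ : List (Set X) → Set X) : Prop :=
  (∀ (U : Set X) (rest : List (Set X)), ChLegal t σ (U :: rest) →
      t.IsOpen (σ (U :: rest)) ∧ (σ (U :: rest)).Nonempty ∧ σ (U :: rest) ⊆ U) ∧
  (∀ f : ℕ → Set X, (∀ n : ℕ, ChLegal t σ (chHist f n)) →
      (⋂ n : ℕ, σ (chHist f (n + 1))).Nonempty)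

theorem chHist_map (r : Set X → Set X) (f : ℕ → Set X) (n : ℕ) :
    (chHist f n).map r = chHist (r ∘ f) n := by
  induction n with
  | zero => rfl
  | succ n ih => simp only [chHist, List.map_cons, ih, Function.comp_apply]

theorem ChLegal.of_subset {t : TopologicalSpace X} {σ σ' : List (Set X) → Set X}
    (h : ∀ U rest, ChLegal t σ (U :: rest) → σ' (U :: rest) ⊆ σ (U :: rest)) :
    ∀ {l : List (Set X)}, ChLegal t σ' l → ChLegal t σ l
  | [], _ => trivial
  | [_], ⟨_, hU⟩ => ⟨trivial, hU.1, hU.2.1, fun h => absurd rfl h⟩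
  | _ :: V :: rest, ⟨hrest, hUo, hUne, hUsub⟩ =>
    have hrest' := ChLegal.of_subset h hrest
    ⟨hrest', hUo, hUne, fun hne => (hUsub hne).trans (h V rest hrest')⟩

theorem ChWinning.of_subset {t : TopologicalSpace X} {σ σ' : List (Set X) → Set X}
    (hσ : ChWinning t σ)
    (h : ∀ U rest, ChLegal t σ (U :: rest) →
      t.IsOpen (σ' (U :: rest)) ∧ (σ' (U :: rest)).Nonempty ∧ σ' (U :: rest) ⊆ σ (U :: rest)) :
    ChWinning t σ' := by
  have hlegal {l} : ChLegal t σ' l → ChLegal t σ l :=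
    ChLegal.of_subset fun U rest hl => (h U rest hl).2.2
  refine ⟨fun U rest hl => ?_, fun f hf => ?_⟩
  · obtain ⟨hopen, hne, hsub⟩ := h U rest (hlegal hl)
    exact ⟨hopen, hne, hsub.trans (hσ.1 U rest (hlegal hl)).2.2⟩
  · obtain ⟨x, hx⟩ := hσ.2 f fun n => hlegal (hf n)
    -- B's `σ`-reply in round `n + 1` lies in A's move of that round, hence in the `σ'`-reply
    -- of round `n`.
    refine ⟨x, mem_iInter.2 fun n => (hf (n + 2)).2.2.2 (List.cons_ne_nil _ _) ?_⟩
    exact (hσ.1 _ _ (hlegal (hf (n + 2)))).2.2 (mem_iInter.1 hx (n + 1))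

theorem ChLegal.map {t t' : TopologicalSpace X} {σ : List (Set X) → Set X} {r : Set X → Set X}
    (hr : ∀ U, t'.IsOpen U → U.Nonempty → t.IsOpen (r U) ∧ (r U).Nonempty ∧ r U ⊆ U) :
    ∀ {l : List (Set X)}, ChLegal t' (fun l => σ (l.map r)) l → ChLegal t σ (l.map r)
  | [], _ => trivial
  | U :: rest, ⟨hrest, hUo, hUne, hUsub⟩ =>
    have hrU := hr U hUo hUne
    ⟨ChLegal.map hr hrest, hrU.1, hrU.2.1, fun hne =>
      hrU.2.2.trans (hUsub fun h => hne (by rw [h]; rfl))⟩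

theorem ChWinning.comp_map {t t' : TopologicalSpace X} {σ : List (Set X) → Set X}
    (hσ : ChWinning t σ) (r : Set X → Set X)
    (hr : ∀ U, t'.IsOpen U → U.Nonempty → t.IsOpen (r U) ∧ (r U).Nonempty ∧ r U ⊆ U)
    (hopen : ∀ U rest, ChLegal t σ ((U :: rest).map r) → t'.IsOpen (σ ((U :: rest).map r))) :
    ChWinning t' (fun l => σ (l.map r)) := by
  refine ⟨fun U rest hl => ?_, fun f hf => ?_⟩
  · have hl' := ChLegal.map hr hl
    obtain ⟨-, hne, hsub⟩ := hσ.1 (r U) (rest.map r) hl'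
    exact ⟨hopen U rest hl', hne, hsub.trans (hr U hl.2.1 hl.2.2.1).2.2⟩
  · simp only [chHist_map]
    exact hσ.2 (r ∘ f) fun n => chHist_map r f n ▸ ChLegal.map hr (hf n)

/-- The default `univ` makes `basicInside S` land in `S` whenever `univ ∈ S`. -/
noncomputable def basicInside (S : Set (Set X)) (V : Set X) : Set X :=
  open Classical in if h : ∃ s ∈ S, s.Nonempty ∧ s ⊆ V then h.choose else univ

theorem basicInside_spec [TopologicalSpace X] {S : Set (Set X)} (hS : IsTopologicalBasis S)
    {V : Set X} (hV : IsOpen V) (hne : V.Nonempty) :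
    basicInside S V ∈ S ∧ (basicInside S V).Nonempty ∧ basicInside S V ⊆ V := by
  have h := hS.exists_nonempty_subset hne hV
  rw [basicInside, dif_pos h]
  exact h.choose_spec

theorem basicInside_mem {S : Set (Set X)} (hS : univ ∈ S) (V : Set X) : basicInside S V ∈ S := by
  unfold basicInside
  split_ifs with h
  exacts [h.choose_spec.1, hS]

theorem IsChoquet.exists_chWinning_mem_basis {t : TopologicalSpace X} (h : IsChoquet t)
    {B : Set (Set X)} (hB : @IsTopologicalBasis X t B) :
    ∃ σ, ChWinning t σ ∧ ∀ U rest, ChLegal t σ (U :: rest) → σ (U :: rest) ∈ B := by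
  obtain ⟨σ, hσ : ChWinning t σ⟩ := h
  have hspec U rest (hl : ChLegal t σ (U :: rest)) :=
    basicInside_spec hB (hσ.1 U rest hl).1 (hσ.1 U rest hl).2.1
  refine ⟨fun l => basicInside B (σ l), hσ.of_subset fun U rest hl => ?_, fun U rest hl => ?_⟩
  · exact ⟨hB.isOpen (hspec U rest hl).1, (hspec U rest hl).2⟩
  · exact (hspec U rest (ChLegal.of_subset (fun U rest hl => (hspec U rest hl).2.2) hl)).1

theorem isChoquet_generateFrom {t : TopologicalSpace X} {σ : List (Set X) → Set X}
    (hσ : ChWinning t σ) {S : Set (Set X)} (hS : FiniteInter S) (hSopen : ∀ s ∈ S, t.IsOpen s)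
    (hσS : ∀ U rest, ChLegal t σ (U :: rest) → (∀ V ∈ U :: rest, V ∈ S) → σ (U :: rest) ∈ S) :
    IsChoquet (generateFrom S) := by
  have hbasis : @IsTopologicalBasis X (generateFrom S) S :=
    isTopologicalBasis_of_subbasis_of_finiteInter (t := _) rfl hS
  refine ⟨_, hσ.comp_map (basicInside S) (fun U hU hne => ?_) fun U rest hl => ?_⟩
  · obtain ⟨hmem, hsub⟩ := @basicInside_spec X (generateFrom S) S hbasis U hU hne
    exact ⟨hSopen _ hmem, hsub⟩
  · refine isOpen_generateFrom_of_mem (hσS _ _ hl fun V hV => ?_)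
    obtain ⟨W, -, rfl⟩ := List.mem_map.1 (show V ∈ (U :: rest).map _ from hV)
    exact basicInside_mem hS.univ_mem W

end Game

/-- given a Choquet space `(X, τ)`, a basis `B` of `τ` closed
under finite intersections and `B₀ ⊆ B`, there is `B₀ ⊆ B₁ ⊆ B` with
`|B₁| ≤ |B₀| + ℵ₀` such that the topology generated by `B₁` is Choquet. -/
theorem stmt_13 {X : Type*} (τ : TopologicalSpace X)
    (hCh : IsChoquet τ)
    (B : Set (Set X)) (hbase : @TopologicalSpace.IsTopologicalBasis X τ B)
    (hinter : ∀ s ∈ B, ∀ t ∈ B, s ∩ t ∈ B)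
    (B₀ : Set (Set X)) (hB₀ : B₀ ⊆ B) :
    ∃ B₁ : Set (Set X), B₀ ⊆ B₁ ∧ B₁ ⊆ B ∧
      Cardinal.mk ↥B₁ ≤ Cardinal.mk ↥B₀ + Cardinal.aleph0 ∧
      IsChoquet (TopologicalSpace.generateFrom B₁) := by
  obtain ⟨σ, hσ, hσB⟩ := hCh.exists_chWinning_mem_basis hbase
  obtain ⟨S, hS, hB₀S, hSB, hScard, hσS⟩ := exists_finiteInter_superset_closed hinter hB₀ σ
  have hS_eq : insert univ (S ∩ B) = S := by
    refine subset_antisymm (insert_subset hS.univ_mem inter_subset_left) fun s hs => ?_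
    rcases hSB hs with rfl | hsB
    exacts [mem_insert _ _, mem_insert_of_mem _ ⟨hs, hsB⟩]
  refine ⟨S ∩ B, subset_inter hB₀S hB₀, inter_subset_right,
    (mk_le_mk_of_subset inter_subset_left).trans hScard, ?_⟩
  rw [← generateFrom_insert_univ, hS_eq]
  refine isChoquet_generateFrom hσ hS (fun s hs => ?_) fun U rest hl hLS =>
    hσS _ hLS (hσB U rest hl)
  rcases hSB hs with rfl | hsB
  exacts [isOpen_univ, hbase.isOpen hsB]
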